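/- arXiv:2210.12419 — 3 statements merged into one kernel-verified Lean document; each statement's English description precedes it below -/
import Mathlib

section
/- Let C be a Grothendieck category, L a stable localizing subcategory, and Y an injective object of C. Then Y is isomorphic to t_L(Y) ⊕ S(T(Y)), where t_L(Y) is the largest subobject of Y lying in L; in particular t_L(Y) is injective. -/
open CategoryTheory Limits

universe w v u u₂ u₃ u₄ u₅

namespace CentralSheaf

variable {C : Type u} [Category.{v} C] [Abelian C]

/-- A monomorphism is essential if every morphism whose precomposition with it
is a monomorphism is itself a monomorphism. -/
def IsEssentialMono {X Y : C} (f : X ⟶ Y) : Prop :=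
  Mono f ∧ ∀ ⦃Z : C⦄ (g : Y ⟶ Z), Mono (f ≫ g) → Mono g

/-- A Serre subcategory of an abelian category, given as a predicate on objects:
it contains the zero objects and is closed under isomorphisms, subobjects,
quotient objects and extensions. -/
structure IsSerre (P : C → Prop) : Prop where
  zero : ∀ X : C, IsZero X → P X
  iso : ∀ {X Y : C}, (X ≅ Y) → P X → P Y
  sub : ∀ {X Y : C} (f : X ⟶ Y), Mono f → P Y → P X
  quot : ∀ {X Y : C} (f : X ⟶ Y), Epi f → P X → P Y
  ext : ∀ S : ShortComplex C, S.ShortExact → P S.X₁ → P S.X₃ → P S.X₂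

/-- A localizing subcategory: a Serre subcategory closed under arbitrary direct sums. -/
structure IsLocalizing (P : C → Prop) extends IsSerre P : Prop where
  sums : ∀ {ι : Type v} (X : ι → C) (c : Cofan X), IsColimit c → (∀ i, P (X i)) → P c.pt

/-- Stability: closure under essential extensions. -/
def IsStable (P : C → Prop) : Prop :=
  ∀ {X Y : C} (f : X ⟶ Y), IsEssentialMono f → P X → P Y

/-- A stable localizing subcategory. -/
structure IsStableLocalizing (P : C → Prop) extends IsLocalizing P : Prop where
  stable : IsStable P

/-- Data exhibiting `D` as the Gabriel quotient `C/P` of `C` by the localizing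
subcategory `P`: an exact quotient functor `T` with fully faithful right adjoint
(section functor) `S`, whose kernel is exactly `P`. -/
structure QuotientData (P : C → Prop) (D : Type u₂) [Category.{v} D] [Abelian D] where
  T : C ⥤ D
  S : D ⥤ C
  adj : T ⊣ S
  additive : T.Additive
  preservesFiniteLimits : PreservesFiniteLimits T
  fullS : S.Full
  faithfulS : S.Faithful
  ker : ∀ X : C, P X ↔ IsZero (T.obj X)

/-- `t` is the `P`-torsion subobject of its ambient object: it lies in `P` and
contains every subobject lying in `P`. -/
def IsTorsionSubobject (P : C → Prop) {X : C} (t : Subobject X) : Prop :=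
  P ((t : C)) ∧ ∀ s : Subobject X, P ((s : C)) → s ≤ t

/-- `P₃` is the smallest localizing subcategory containing `P₁` and `P₂`. -/
def IsJoin (P₁ P₂ P₃ : C → Prop) : Prop :=
  IsLocalizing P₃ ∧ (∀ X, P₁ X → P₃ X) ∧ (∀ X, P₂ X → P₃ X) ∧
    ∀ Q : C → Prop, IsLocalizing Q → (∀ X, P₁ X → Q X) → (∀ X, P₂ X → Q X) →
      ∀ X, P₃ X → Q X

/-- An object is noetherian if its subobjects satisfy the ascending chain condition. -/
def IsNoetherianObject (X : C) : Prop := WellFoundedGT (Subobject X)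

/-- A Grothendieck category is locally noetherian if it has a (separating) set of
noetherian generators. -/
def IsLocallyNoetherian (C : Type u) [Category.{v} C] [Abelian C] : Prop :=
  ∃ 𝒢 : Set C, ObjectProperty.IsSeparating 𝒢 ∧ ∀ G ∈ 𝒢, IsNoetherianObject G

/-!
Choose, by Zorn's lemma, a subobject `m ⊆ Y` maximal among those meeting `t` trivially; AB5 is
what makes the union of a chain of such subobjects again meet `t` trivially. Maximality makes
`t → Y/m` an essential monomorphism, so `Y/m` is torsion by stability. Extending `t ↪ Y` along
`t → Y/m` by injectivity of `Y` gives a map `Y/m → Y` whose image is torsion, hence lies in `t`;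
this splits `t ↪ Y`. The complement `K = Y/t` is then injective and torsion-free, and for such an
object the unit `K → S(T K)` is an isomorphism: its kernel and the kernel of a retraction are
torsion, hence zero. Finally `T K ≅ T Y` because `T t = 0`.
-/

section SubobjectLattice

variable {Y : C}

theorem Subobject.inf_eq_bot_iff (s u : Subobject Y) :
    s ⊓ u = ⊥ ↔ ∀ ⦃W : C⦄ (f : W ⟶ Y), s.Factors f → u.Factors f → f = 0 := by
  refine ⟨fun h W f hs hu => ?_, fun h => le_bot_iff.1 (Subobject.le_of_factors ?_)⟩
  · rw [← Subobject.bot_factors_iff_zero, ← h]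
    exact (Subobject.inf_factors f).2 ⟨hs, hu⟩
  · exact (Subobject.bot_factors_iff_zero _).2
      (h _ (Subobject.inf_arrow_factors_left s u) (Subobject.inf_arrow_factors_right s u))

theorem Subobject.factors_iff_comp_cokernel_π (m : Subobject Y) {W : C} (f : W ⟶ Y) :
    m.Factors f ↔ f ≫ cokernel.π m.arrow = 0 := by
  refine ⟨fun h => ?_, fun h => ?_⟩
  · rw [← Subobject.factorThru_arrow m f h, Category.assoc, cokernel.condition, comp_zero]
  · rw [← Abelian.monoLift_comp m.arrow f h]
    exact Subobject.factors_comp_arrow _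

theorem mono_arrow_comp_cokernel_π {m t : Subobject Y} (h : m ⊓ t = ⊥) :
    Mono (t.arrow ≫ cokernel.π m.arrow) :=
  Preadditive.mono_of_cancel_zero _ fun x hx => zero_of_comp_mono t.arrow <|
    (Subobject.inf_eq_bot_iff m t).1 h _
      ((Subobject.factors_iff_comp_cokernel_π m _).2 (by rwa [Category.assoc]))
      (Subobject.factors_comp_arrow x)

theorem mono_of_kernelSubobject_le {m : Subobject Y} {Z : C} {g : cokernel m.arrow ⟶ Z}
    (h : kernelSubobject (cokernel.π m.arrow ≫ g) ≤ m) : Mono g := by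
  refine Preadditive.mono_of_cancel_zero _ fun {W} x hx => ?_
  obtain ⟨W', e, _, y, hy⟩ := surjective_up_to_refinements_of_epi (cokernel.π m.arrow) x
  have hm : m.Factors y := Subobject.factors_of_le y h <|
    (kernelSubobject_factors_iff _ y).2 (by rw [← Category.assoc, ← hy, Category.assoc, hx,
      comp_zero])
  rw [← cancel_epi e, hy, (Subobject.factors_iff_comp_cokernel_π m y).1 hm, comp_zero]

theorem isEssentialMono_arrow_comp_cokernel_π {m t : Subobject Y}
    (hm : Maximal (fun s => s ⊓ t = ⊥) m) :
    IsEssentialMono (t.arrow ≫ cokernel.π m.arrow) := by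
  refine ⟨mono_arrow_comp_cokernel_π hm.1, fun Z g hg => mono_of_kernelSubobject_le ?_⟩
  refine hm.2 ?_ (le_kernelSubobject _ _ (by rw [← Category.assoc, cokernel.condition,
    zero_comp]))
  refine (Subobject.inf_eq_bot_iff _ t).2 fun W f hk ht => ?_
  rw [← Subobject.factorThru_arrow t f ht] at hk ⊢
  have : Subobject.factorThru t f ht ≫ (t.arrow ≫ cokernel.π m.arrow) ≫ g = 0 := by
    simpa only [Category.assoc] using (kernelSubobject_factors_iff _ _).1 hk
  rw [zero_of_comp_mono _ this, zero_comp]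

end SubobjectLattice

section Grothendieck

variable [IsGrothendieckAbelian.{w} C] {Y : C}

attribute [local instance] IsFiltered.isConnected

theorem mk_inf_eq_bot_of_isColimit {J : Type w} [SmallCategory J] [IsFiltered J]
    (F : J ⥤ MonoOver Y) {c : Cocone (F ⋙ MonoOver.forget _ ⋙ Over.forget _)}
    (hc : IsColimit c) (f : c.pt ⟶ Y) [Mono f] (hf : ∀ j, c.ι.app j ≫ f = (F.obj j).obj.hom)
    (u : Subobject Y) (h : ∀ j, Subobject.mk (F.obj j).obj.hom ⊓ u = ⊥) :
    Subobject.mk f ⊓ u = ⊥ := by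
  refine (Subobject.inf_eq_bot_iff _ u).2 fun W g hg hu => ?_
  obtain ⟨x, rfl⟩ : ∃ x : W ⟶ c.pt, x ≫ f = g := hg
  -- Exactness of filtered colimits: `x ≫ f` vanishes once it does after pulling `x` back along
  -- every colimit inclusion, and those pullbacks land in `F.obj j ⊓ u = ⊥`.
  refine hc.pullback_zero_ext fun j => ?_
  have hj : pullback.snd (c.ι.app j) x ≫ x ≫ f =
      pullback.fst (c.ι.app j) x ≫ (F.obj j).obj.hom := by
    rw [← Category.assoc, ← pullback.condition, Category.assoc, hf]
  refine (Subobject.inf_eq_bot_iff _ u).1 (h j) _ ?_ (Subobject.factors_of_factors_right _ hu)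
  rw [hj]
  exact (Subobject.mk_factors_iff _ _).2 ⟨_, rfl⟩

theorem iSup_inf_eq_bot_of_monotone {ι : Type w} [Preorder ι] [IsDirectedOrder ι] [Nonempty ι]
    {s : ι → Subobject Y} (hs : Monotone s) (u : Subobject Y) (h : ∀ i, s i ⊓ u = ⊥) :
    (⨆ i, s i) ⊓ u = ⊥ := by
  let F : ι ⥤ MonoOver Y := hs.functor ⋙ Subobject.representative
  let f : colimit (F ⋙ MonoOver.forget _ ⋙ Over.forget _) ⟶ Y :=
    colimit.desc _ (Cocone.mk Y
      { app j := (F.obj j).obj.hom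
        naturality _ _ g := by simp })
  have hf : ∀ j, colimit.ι _ j ≫ f = (F.obj j).obj.hom := fun j => colimit.ι_desc _ _
  have := IsGrothendieckAbelian.mono_of_isColimit_monoOver F (colimit.isColimit _) f hf
  have hF : ∀ i, Subobject.mk (F.obj i).obj.hom = s i := fun i => Subobject.mk_arrow (s i)
  have hsup := IsGrothendieckAbelian.subobjectMk_of_isColimit_eq_iSup F (colimit.isColimit _) f hf
  simp only [hF] at hsup
  rw [← hsup]
  exact mk_inf_eq_bot_of_isColimit F (colimit.isColimit _) f hf u fun i => by rw [hF]; exact h i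

theorem sSup_inf_eq_bot {S : Set (Subobject Y)} (hS : DirectedOn (· ≤ ·) S) (u : Subobject Y)
    (h : ∀ s ∈ S, s ⊓ u = ⊥) : sSup S ⊓ u = ⊥ := by
  rcases S.eq_empty_or_nonempty with rfl | hne
  · rw [sSup_empty, bot_inf_eq]
  -- Reindex `S` by a `w`-small type, so that it becomes a filtered diagram in `C`.
  have : Nonempty (Shrink.{w} S) := hne.to_subtype.map (equivShrink S)
  have : IsDirectedOrder (Shrink.{w} S) := ⟨fun a b => by
    obtain ⟨c, hc, hac, hbc⟩ := hS _ ((equivShrink S).symm a).2 _ ((equivShrink S).symm b).2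
    refine ⟨equivShrink S ⟨c, hc⟩, ?_, ?_⟩ <;>
      change _ ≤ (equivShrink S).symm _ <;> rwa [Equiv.symm_apply_apply]⟩
  have hs : Monotone fun i : Shrink.{w} S => ((equivShrink S).symm i : Subobject Y) :=
    fun _ _ hij => hij
  convert iSup_inf_eq_bot_of_monotone hs u fun i => h _ ((equivShrink S).symm i).2
  rw [sSup_eq_iSup', ← (equivShrink S).symm.iSup_comp]

theorem exists_maximal_inf_eq_bot (t : Subobject Y) : ∃ m, Maximal (fun s => s ⊓ t = ⊥) m :=
  zorn_le₀ {s : Subobject Y | s ⊓ t = ⊥} fun c hc hchain =>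
    ⟨sSup c, sSup_inf_eq_bot hchain.directedOn t hc, fun _ => le_sSup⟩

end Grothendieck

section Torsion

variable {P : C → Prop} {Y : C} {t : Subobject Y}

theorem IsTorsionSubobject.factors (hP : IsSerre P) (ht : IsTorsionSubobject P t) {E : C}
    (f : E ⟶ Y) (hE : P E) : t.Factors f := by
  have himage : P (imageSubobject f : C) :=
    hP.iso (imageSubobjectIso f).symm (hP.quot (factorThruImage f) inferInstance hE)
  rw [← imageSubobject_arrow_comp f]
  exact Subobject.factors_of_le _ (ht.2 _ himage) (Subobject.factors_comp_arrow _)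

theorem IsTorsionSubobject.isSplitMono_arrow [IsGrothendieckAbelian.{w} C] [Injective Y]
    (hP : IsSerre P) (hstable : IsStable P) (ht : IsTorsionSubobject P t) :
    IsSplitMono t.arrow := by
  obtain ⟨m, hm⟩ := exists_maximal_inf_eq_bot.{w} t
  have hess := isEssentialMono_arrow_comp_cokernel_π hm
  have := hess.1
  obtain ⟨ρ, hρ⟩ := Injective.factors t.arrow (t.arrow ≫ cokernel.π m.arrow)
  have hρt := ht.factors hP ρ (hstable _ hess ht.1)
  refine ⟨⟨cokernel.π m.arrow ≫ t.factorThru ρ hρt, ?_⟩⟩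
  rw [← cancel_mono t.arrow]
  simpa using hρ

theorem IsTorsionSubobject.eq_zero_of_comp_cokernel_π_eq_id (hP : IsSerre P)
    (ht : IsTorsionSubobject P t) {s : cokernel t.arrow ⟶ Y} (hs : s ≫ cokernel.π t.arrow = 𝟙 _)
    {W : C} (f : W ⟶ cokernel t.arrow) (hW : P W) : f = 0 := by
  calc f = (f ≫ s) ≫ cokernel.π t.arrow := by rw [Category.assoc, hs, Category.comp_id]
    _ = 0 := (Subobject.factors_iff_comp_cokernel_π t _).1 (ht.factors hP _ hW)

end Torsion

namespace QuotientData

variable {P : C → Prop} {D : Type u₂} [Category.{v} D] [Abelian D] (Q : QuotientData P D)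

attribute [local instance] QuotientData.additive QuotientData.preservesFiniteLimits
  QuotientData.fullS QuotientData.faithfulS

theorem hom_eq_zero_of_torsion {W : C} (hW : P W) {Z : D} (f : W ⟶ Q.S.obj Z) : f = 0 :=
  (Q.adj.homEquiv W Z).symm.injective (((Q.ker W).1 hW).eq_of_src _ _)

theorem torsion_kernel_of_isIso_map {X Y : C} (f : X ⟶ Y) [IsIso (Q.T.map f)] :
    P (kernel f) :=
  (Q.ker _).2 ((isZero_kernel_of_mono (Q.T.map f)).of_iso (PreservesKernel.iso Q.T f))

instance isIso_map_unit_app (X : C) : IsIso (Q.T.map (Q.adj.unit.app X)) := by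
  have : IsIso (Q.T.map (Q.adj.unit.app X) ≫ Q.adj.counit.app (Q.T.obj X)) := by
    rw [Q.adj.left_triangle_components X]; exact IsIso.id _
  exact IsIso.of_isIso_comp_right _ (Q.adj.counit.app (Q.T.obj X))

theorem isIso_map_cokernel_π {X Y : C} (f : X ⟶ Y) (hX : P X) :
    IsIso (Q.T.map (cokernel.π f)) := by
  have := Q.adj.leftAdjoint_preservesColimits
  have := cokernel.π_of_zero (((Q.ker X).1 hX).eq_of_src (Q.T.map f) 0)
  rw [← (Iso.comp_inv_eq _).2 (PreservesCokernel.π_iso_hom Q.T f).symm]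
  infer_instance

theorem isIso_unit_app_of_injective {K : C} [Injective K]
    (hK : ∀ ⦃W : C⦄ (f : W ⟶ K), P W → f = 0) : IsIso (Q.adj.unit.app K) := by
  set η : K ⟶ Q.S.obj (Q.T.obj K) := Q.adj.unit.app K
  have : Mono η := Abelian.mono_of_kernel_ι_eq_zero _ (hK _ (Q.torsion_kernel_of_isIso_map η))
  set σ := Injective.factorThru (𝟙 K) η
  have hσ : η ≫ σ = 𝟙 K := Injective.comp_factorThru _ _
  have : IsIso (Q.T.map σ) := by
    have : IsIso (Q.T.map η ≫ Q.T.map σ) := by rw [← Q.T.map_comp, hσ, Q.T.map_id]; infer_instance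
    exact IsIso.of_isIso_comp_left (Q.T.map η) _
  have : Mono σ := Abelian.mono_of_kernel_ι_eq_zero _
    (Q.hom_eq_zero_of_torsion (Q.torsion_kernel_of_isIso_map σ) _)
  have : IsSplitEpi σ := ⟨⟨η, hσ⟩⟩
  have : IsIso σ := isIso_of_mono_of_isSplitEpi σ
  have : IsIso (η ≫ σ) := by rw [hσ]; infer_instance
  exact IsIso.of_isIso_comp_right η σ

end QuotientData

/-- If `L` is a stable localizing subcategory of a Grothendieck
category `C` and `Y` is injective, then `Y ≅ t_L(Y) ⊞ S(T(Y))`, and in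
particular the torsion subobject `t_L(Y)` is injective. -/
theorem injective_decomposition_of_stable
    [HasColimits C] [AB5 C] (hsep : ∃ G : C, IsSeparator G)
    {D : Type u₂} [Category.{v} D] [Abelian D]
    (P : C → Prop) (hP : IsStableLocalizing P) (Q : QuotientData P D)
    (Y : C) (hY : Injective Y) (t : Subobject Y) (ht : IsTorsionSubobject P t) :
    Nonempty (Y ≅ (t : C) ⊞ Q.S.obj (Q.T.obj Y)) ∧ Injective ((t : C)) := by
  have : HasSeparator C := ⟨hsep⟩
  have : IsGrothendieckAbelian.{v} C := {}
  have := hY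
  have : IsSplitMono t.arrow := ht.isSplitMono_arrow hP.toIsSerre hP.stable
  let b : BinaryBicone (t : C) (cokernel t.arrow) :=
    binaryBiconeOfIsSplitMonoOfCokernel (colimit.isColimit _)
  have hb : b.IsBilimit := isBilimitBinaryBiconeOfIsSplitMonoOfCokernel _
  have : Injective (cokernel t.arrow) :=
    (⟨b.inr, b.snd, b.inr_snd⟩ : Retract (cokernel t.arrow) Y).injective
  have : IsIso (Q.adj.unit.app (cokernel t.arrow)) := Q.isIso_unit_app_of_injective
    fun _ f hW => ht.eq_zero_of_comp_cokernel_π_eq_id hP.toIsSerre b.inr_snd f hW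
  have := Q.isIso_map_cokernel_π t.arrow ht.1
  refine ⟨⟨biprod.uniqueUpToIso _ _ hb ≪≫
    biprod.mapIso (Iso.refl _) (asIso (Q.adj.unit.app (cokernel t.arrow)) ≪≫
      Q.S.mapIso (asIso (Q.T.map (cokernel.π t.arrow))).symm)⟩,
    Retract.injective ⟨t.arrow, retraction t.arrow, IsSplitMono.id t.arrow⟩⟩

end CentralSheaf
end

section
/- Let C be a Grothendieck category and L₀, L₁ localizing subcategories. The natural functor R : C/(L₀ ∩ L₁) → (C/L₀) ×_{C/(L₀∨L₁)} (C/L₁) given by X ↦ (Q₀(X), Q₁(X), id) is exact and faithful. -/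
open CategoryTheory Limits

universe w v u u₂ u₃ u₄ u₅

namespace CentralSheaf

variable {C : Type u} [Category.{v} C] [Abelian C]

section Recollement

variable {D₀ : Type u₂} [Category.{v} D₀] {D₁ : Type u₃} [Category.{v} D₁]
  {E : Type u₄} [Category.{v} E]

/-- Gabriel's recollement (fiber product) category of `F₀ : D₀ ⥤ E` and
`F₁ : D₁ ⥤ E`: objects are triples `(X₀, X₁, σ)` where `σ : F₀(X₀) ≅ F₁(X₁)`,
realized as the full subcategory of the comma category `Comma F₀ F₁` on those
objects whose structure morphism is an isomorphism. -/
abbrev Recollement (F₀ : D₀ ⥤ E) (F₁ : D₁ ⥤ E) : Type _ :=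
  ObjectProperty.FullSubcategory (fun X : Comma F₀ F₁ => IsIso X.hom)

/-- The canonical comparison functor `D ⥤ Recollement F₀ F₁` induced by functors
`G₀ : D ⥤ D₀`, `G₁ : D ⥤ D₁` and a natural isomorphism `G₀ ⋙ F₀ ≅ G₁ ⋙ F₁`,
sending `X` to `(G₀(X), G₁(X), σ_X)`. -/
@[simps] def gluing {D : Type u₅} [Category.{v} D] (F₀ : D₀ ⥤ E) (F₁ : D₁ ⥤ E)
    (G₀ : D ⥤ D₀) (G₁ : D ⥤ D₁) (σ : G₀ ⋙ F₀ ≅ G₁ ⋙ F₁) :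
    D ⥤ Recollement F₀ F₁ where
  obj X := ⟨⟨G₀.obj X, G₁.obj X, σ.hom.app X⟩, inferInstance⟩
  map f := ⟨⟨G₀.map f, G₁.map f, by simpa using σ.hom.naturality f⟩⟩

end Recollement

/-! The quotient functor `T : C ⥤ C/(L₀ ∩ L₁)` has a fully faithful right adjoint `S`, so
`S ⋙ T ≅ 𝟭`: every finite diagram in the quotient lifts, up to isomorphism, along `T` to `C`,
where its (co)limit exists and is preserved by `T`. Hence a functor `H` out of the quotient is
exact as soon as `T ⋙ H` is; this applies to `G₀`, `G₁` (as `T ⋙ Gᵢ ≅ Qᵢ`) and to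
`G₀ ⋙ F₀ ≅ G₁ ⋙ F₁`, and (co)limits in the recollement are computed componentwise as soon as
the composite to `C/(L₀ ∨ L₁)` preserves them.
For faithfulness, every morphism of the quotient is `T (S α)` up to the counit, and a morphism
of `C` killed by both `Q₀` and `Q₁` has image in `L₀ ∩ L₁`, so it is killed by `T`. -/

section LiftingDiagrams

variable {A : Type*} [Category A] {B : Type*} [Category B] {B' : Type*} [Category B']
  {T : A ⥤ B} {S : B ⥤ A} (ε : S ⋙ T ≅ 𝟭 B) (H : B ⥤ B') {J : Type*} [Category J]

include ε in
lemma preservesLimitsOfShape_of_comp_of_rightInverse [HasLimitsOfShape J A]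
    [PreservesLimitsOfShape J T] [PreservesLimitsOfShape J (T ⋙ H)] :
    PreservesLimitsOfShape J H where
  preservesLimit {K} :=
    have : PreservesLimit (K ⋙ S ⋙ T) H := preservesLimit_of_preserves_limit_cone
      (isLimitOfPreserves T (limit.isLimit (K ⋙ S)))
      (isLimitOfPreserves (T ⋙ H) (limit.isLimit (K ⋙ S)))
    preservesLimit_of_iso_diagram H (Functor.isoWhiskerLeft K ε ≪≫ K.rightUnitor)

include ε in
lemma preservesColimitsOfShape_of_comp_of_rightInverse [HasColimitsOfShape J A]
    [PreservesColimitsOfShape J T] [PreservesColimitsOfShape J (T ⋙ H)] :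
    PreservesColimitsOfShape J H where
  preservesColimit {K} :=
    have : PreservesColimit (K ⋙ S ⋙ T) H := preservesColimit_of_preserves_colimit_cocone
      (isColimitOfPreserves T (colimit.isColimit (K ⋙ S)))
      (isColimitOfPreserves (T ⋙ H) (colimit.isColimit (K ⋙ S)))
    preservesColimit_of_iso_diagram H (Functor.isoWhiskerLeft K ε ≪≫ K.rightUnitor)

end LiftingDiagrams

lemma map_eq_zero_iff_isZero_obj_image {A B : Type*} [Category A] [Abelian A] [Category B]
    [HasZeroMorphisms B] (F : A ⥤ B) [F.PreservesMonomorphisms] [F.PreservesEpimorphisms]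
    {X Y : A} (f : X ⟶ Y) : F.map f = 0 ↔ IsZero (F.obj (Abelian.image f)) := by
  have hf : F.map f = F.map (Abelian.factorThruImage f) ≫ F.map (Abelian.image.ι f) := by
    rw [← F.map_comp, Abelian.image.fac]
  rw [hf]
  refine ⟨fun h => IsZero.of_mono_eq_zero (F.map (Abelian.image.ι f)) ?_,
    fun h => by rw [h.eq_zero_of_src (F.map _), comp_zero]⟩
  rwa [← cancel_epi (F.map (Abelian.factorThruImage f)), comp_zero]

namespace QuotientData

variable {B : Type u₂} [Category.{v} B] [Abelian B] {P : C → Prop} (Qd : QuotientData P B)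

instance : Qd.T.Additive := Qd.additive
instance : PreservesFiniteLimits Qd.T := Qd.preservesFiniteLimits
instance : Qd.T.IsLeftAdjoint := Qd.adj.isLeftAdjoint
instance : Qd.S.Full := Qd.fullS
instance : Qd.S.Faithful := Qd.faithfulS

lemma map_eq_zero_iff {X Y : C} (f : X ⟶ Y) : Qd.T.map f = 0 ↔ P (Abelian.image f) :=
  (map_eq_zero_iff_isZero_obj_image Qd.T f).trans (Qd.ker _).symm

noncomputable def counitIso : Qd.S ⋙ Qd.T ≅ 𝟭 B := asIso Qd.adj.counit

variable {B' : Type*} [Category B']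

lemma preservesFiniteLimits_of_iso {H : B ⥤ B'} {K : C ⥤ B'} (e : Qd.T ⋙ H ≅ K)
    [PreservesFiniteLimits K] :
    PreservesFiniteLimits H where
  preservesFiniteLimits J _ _ :=
    have := preservesLimitsOfShape_of_natIso (J := J) e.symm
    preservesLimitsOfShape_of_comp_of_rightInverse Qd.counitIso H

lemma preservesFiniteColimits_of_iso {H : B ⥤ B'} {K : C ⥤ B'} (e : Qd.T ⋙ H ≅ K)
    [PreservesFiniteColimits K] :
    PreservesFiniteColimits H where
  preservesFiniteColimits J _ _ :=
    have := preservesColimitsOfShape_of_natIso (J := J) e.symm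
    preservesColimitsOfShape_of_comp_of_rightInverse Qd.counitIso H

lemma faithful_of_comp (H : B ⥤ B')
    (h : ∀ {X Y : C} (f g : X ⟶ Y), H.map (Qd.T.map f) = H.map (Qd.T.map g) →
      Qd.T.map f = Qd.T.map g) : H.Faithful where
  map_injective {X Y} α β hαβ := by
    have : (Qd.S ⋙ Qd.T).Faithful := Functor.Faithful.of_iso Qd.counitIso.symm
    refine (Qd.S ⋙ Qd.T).map_injective (h _ _ ?_)
    have hTS (γ : X ⟶ Y) : Qd.T.map (Qd.S.map γ) =
        Qd.counitIso.hom.app X ≫ γ ≫ Qd.counitIso.inv.app Y :=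
      (NatIso.naturality_2 Qd.counitIso γ).symm
    simp only [hTS, Functor.map_comp, hαβ]

lemma map_eq_of_map_eq_of_map_eq {P₀ P₁ : C → Prop}
    {D : Type u₂} [Category.{v} D] [Abelian D] {D₀ : Type u₃} [Category.{v} D₀] [Abelian D₀]
    {D₁ : Type u₄} [Category.{v} D₁] [Abelian D₁]
    (Qm : QuotientData (fun X => P₀ X ∧ P₁ X) D) (Q₀ : QuotientData P₀ D₀)
    (Q₁ : QuotientData P₁ D₁) {X Y : C} {f g : X ⟶ Y} (h₀ : Q₀.T.map f = Q₀.T.map g)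
    (h₁ : Q₁.T.map f = Q₁.T.map g) : Qm.T.map f = Qm.T.map g := by
  rw [← sub_eq_zero, ← Functor.map_sub, map_eq_zero_iff] at h₀ h₁ ⊢
  exact ⟨h₀, h₁⟩

end QuotientData

section Gluing

variable {D₀ : Type u₂} [Category.{v} D₀] {D₁ : Type u₃} [Category.{v} D₁]
  {E : Type u₄} [Category.{v} E] {D : Type u₅} [Category.{v} D]
  {F₀ : D₀ ⥤ E} {F₁ : D₁ ⥤ E} {G₀ : D ⥤ D₀} {G₁ : D ⥤ D₁} (σ : G₀ ⋙ F₀ ≅ G₁ ⋙ F₁)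
  {J : Type w} [Category.{w} J]

lemma gluing_preservesLimitsOfShape [PreservesLimitsOfShape J G₀]
    [PreservesLimitsOfShape J G₁] [PreservesLimitsOfShape J (G₁ ⋙ F₁)] :
    PreservesLimitsOfShape J (gluing F₀ F₁ G₀ G₁ σ) where
  preservesLimit {K} := ⟨fun {c} hc => by
    -- the diagram is `K ⋙ G₁`, spelled the way `Comma.fstSndJointlyReflectLimit` looks for it
    have : PreservesLimit
        (((K ⋙ gluing F₀ F₁ G₀ G₁ σ) ⋙ ObjectProperty.ι _) ⋙ Comma.snd _ _) F₁ :=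
      preservesLimit_of_preserves_limit_cone (isLimitOfPreserves G₁ hc)
        (isLimitOfPreserves (G₁ ⋙ F₁) hc)
    exact ⟨isLimitOfReflects (ObjectProperty.ι _)
      (Comma.fstSndJointlyReflectLimit (isLimitOfPreserves G₀ hc)
        (isLimitOfPreserves G₁ hc))⟩⟩

lemma gluing_preservesColimitsOfShape [PreservesColimitsOfShape J G₀]
    [PreservesColimitsOfShape J G₁] [PreservesColimitsOfShape J (G₀ ⋙ F₀)] :
    PreservesColimitsOfShape J (gluing F₀ F₁ G₀ G₁ σ) where
  preservesColimit {K} := ⟨fun {c} hc => by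
    have : PreservesColimit
        (((K ⋙ gluing F₀ F₁ G₀ G₁ σ) ⋙ ObjectProperty.ι _) ⋙ Comma.fst _ _) F₀ :=
      preservesColimit_of_preserves_colimit_cocone (isColimitOfPreserves G₀ hc)
        (isColimitOfPreserves (G₀ ⋙ F₀) hc)
    exact ⟨isColimitOfReflects (ObjectProperty.ι _)
      (Comma.fstSndJointlyReflectColimit (isColimitOfPreserves G₀ hc)
        (isColimitOfPreserves G₁ hc))⟩⟩

lemma gluing_faithful [Abelian D₀] [Abelian D₁] [Abelian D] {P₀ P₁ : C → Prop}
    (Qm : QuotientData (fun X => P₀ X ∧ P₁ X) D) (Q₀ : QuotientData P₀ D₀)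
    (Q₁ : QuotientData P₁ D₁) (e₀ : Qm.T ⋙ G₀ ≅ Q₀.T) (e₁ : Qm.T ⋙ G₁ ≅ Q₁.T) :
    (gluing F₀ F₁ G₀ G₁ σ).Faithful := by
  refine Qm.faithful_of_comp _ fun f g hfg => Qm.map_eq_of_map_eq_of_map_eq Q₀ Q₁ ?_ ?_
  · rw [← NatIso.naturality_1 e₀ f, ← NatIso.naturality_1 e₀ g]
    exact congrArg (fun φ => e₀.inv.app _ ≫ φ.hom.left ≫ e₀.hom.app _) hfg
  · rw [← NatIso.naturality_1 e₁ f, ← NatIso.naturality_1 e₁ g]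
    exact congrArg (fun φ => e₁.inv.app _ ≫ φ.hom.right ≫ e₁.hom.app _) hfg

end Gluing

theorem gluing_exact_faithful_general
    {D : Type u₅} [Category.{v} D] [Abelian D]
    {D₀ : Type u₂} [Category.{v} D₀] [Abelian D₀]
    {D₁ : Type u₃} [Category.{v} D₁] [Abelian D₁]
    {E : Type u₄} [Category.{v} E] [Abelian E]
    (P₀ P₁ P₃ : C → Prop)
    (Qm : QuotientData (fun X => P₀ X ∧ P₁ X) D)
    (Q₀ : QuotientData P₀ D₀) (Q₁ : QuotientData P₁ D₁)
    (Qj : QuotientData P₃ E)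
    (G₀ : D ⥤ D₀) (G₁ : D ⥤ D₁) (F₀ : D₀ ⥤ E) (F₁ : D₁ ⥤ E)
    (e₀ : Qm.T ⋙ G₀ ≅ Q₀.T) (e₁ : Qm.T ⋙ G₁ ≅ Q₁.T)
    (f₀ : Q₀.T ⋙ F₀ ≅ Qj.T)
    (σ : G₀ ⋙ F₀ ≅ G₁ ⋙ F₁) :
    (gluing F₀ F₁ G₀ G₁ σ).Faithful ∧
    PreservesFiniteLimits (gluing F₀ F₁ G₀ G₁ σ) ∧
    PreservesFiniteColimits (gluing F₀ F₁ G₀ G₁ σ) := by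
  have := Qm.preservesFiniteLimits_of_iso e₀
  have := Qm.preservesFiniteColimits_of_iso e₀
  have := Qm.preservesFiniteLimits_of_iso e₁
  have := Qm.preservesFiniteColimits_of_iso e₁
  have e : Qm.T ⋙ G₀ ⋙ F₀ ≅ Qj.T :=
    (Functor.associator _ _ _).symm ≪≫ Functor.isoWhiskerRight e₀ F₀ ≪≫ f₀
  have := Qm.preservesFiniteLimits_of_iso e
  have := Qm.preservesFiniteColimits_of_iso e
  have := preservesFiniteLimits_of_natIso σ
  exact ⟨gluing_faithful σ Qm Q₀ Q₁ e₀ e₁,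
    ⟨fun _ _ _ => gluing_preservesLimitsOfShape σ⟩,
    ⟨fun _ _ _ => gluing_preservesColimitsOfShape σ⟩⟩

/-- For localizing subcategories `L₀`, `L₁` of a Grothendieck
category `C`, the natural functor
`R : C/(L₀ ∩ L₁) ⥤ (C/L₀) ×_{C/(L₀∨L₁)} (C/L₁)`, `X ↦ (Q₀(X), Q₁(X), id)`,
into Gabriel's recollement category is exact and faithful. Here the quotient
categories are given by quotient data, the functors `Q₀, Q₁, F₀, F₁` are
(arbitrary) functors compatible with the quotient functors, and `σ` is the
natural isomorphism `F₀ ∘ Q₀ ≅ F₁ ∘ Q₁` induced by the identity, i.e.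
compatible with the quotient functors from `C`. -/
theorem gluing_exact_faithful
    [HasColimits C] [AB5 C] (hsep : ∃ G : C, IsSeparator G)
    {D : Type u₅} [Category.{v} D] [Abelian D]
    {D₀ : Type u₂} [Category.{v} D₀] [Abelian D₀]
    {D₁ : Type u₃} [Category.{v} D₁] [Abelian D₁]
    {E : Type u₄} [Category.{v} E] [Abelian E]
    (P₀ P₁ P₃ : C → Prop)
    (h₀ : IsLocalizing P₀) (h₁ : IsLocalizing P₁) (hjoin : IsJoin P₀ P₁ P₃)
    (Qm : QuotientData (fun X => P₀ X ∧ P₁ X) D)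
    (Q₀ : QuotientData P₀ D₀) (Q₁ : QuotientData P₁ D₁)
    (Qj : QuotientData P₃ E)
    (G₀ : D ⥤ D₀) (G₁ : D ⥤ D₁) (F₀ : D₀ ⥤ E) (F₁ : D₁ ⥤ E)
    (e₀ : Qm.T ⋙ G₀ ≅ Q₀.T) (e₁ : Qm.T ⋙ G₁ ≅ Q₁.T)
    (f₀ : Q₀.T ⋙ F₀ ≅ Qj.T) (f₁ : Q₁.T ⋙ F₁ ≅ Qj.T)
    (σ : G₀ ⋙ F₀ ≅ G₁ ⋙ F₁)
    (hσ : ∀ X : C, σ.hom.app (Qm.T.obj X) ≫ F₁.map (e₁.hom.app X) ≫ f₁.hom.app X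
      = F₀.map (e₀.hom.app X) ≫ f₀.hom.app X) :
    (gluing F₀ F₁ G₀ G₁ σ).Faithful ∧
    PreservesFiniteLimits (gluing F₀ F₁ G₀ G₁ σ) ∧
    PreservesFiniteColimits (gluing F₀ F₁ G₀ G₁ σ) :=
  gluing_exact_faithful_general P₀ P₁ P₃ Qm Q₀ Q₁ Qj G₀ G₁ F₀ F₁ e₀ e₁ f₀ σ

end CentralSheaf
end

section
/- Let C be a Grothendieck category and E an injective cogenerator such that every object of C embeds into a direct sum of copies of E. Then the evaluation map Z(C) → Z(End_C(E)), sending a natural endomorphism z of the identity functor to its component z_E, is a ring isomorphism onto the center of the endomorphism ring of E. -/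
open CategoryTheory Limits

universe w v u u₂ u₃ u₄ u₅

namespace CentralSheaf

section

variable {C : Type*} [Category C]

lemma isCoseparator_of_injective [Abelian C] {E : C} (hE : Injective E)
    (hcog : ∀ M : C, ¬ IsZero M → ∃ f : M ⟶ E, f ≠ 0) : IsCoseparator E := by
  refine (Preadditive.isCoseparator_iff E).2 fun X Y f hf => ?_
  by_contra hne
  obtain ⟨p, hp⟩ := hcog (image f) fun hz => hne <| by
    rw [← image.fac f, hz.eq_of_src (image.ι f) 0, comp_zero]
  obtain ⟨h, hh⟩ := hE.factors p (image.ι f)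
  refine hp ((cancel_epi (factorThruImage f)).1 ?_)
  rw [← hh, ← Category.assoc, image.fac, hf, comp_zero]

def ActsAs {E X : C} (φ : End E) (a : End X) : Prop :=
  ∀ h : X ⟶ E, a ≫ h = h ≫ φ

namespace ActsAs

variable {E : C} {φ : End E}

lemma comp_eq [Preadditive C] (hcosep : IsCoseparator E) {X Y : C} {a : End X} {b : End Y}
    (ha : ActsAs φ a) (hb : ActsAs φ b) (u : X ⟶ Y) : a ≫ u = u ≫ b :=
  hcosep.def _ _ fun h => by
    rw [Category.assoc, Category.assoc, hb h, ha, Category.assoc]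

lemma eq [Preadditive C] (hcosep : IsCoseparator E) {X : C} {a b : End X}
    (ha : ActsAs φ a) (hb : ActsAs φ b) : a = b := by
  simpa using ha.comp_eq hcosep hb (𝟙 X)

lemma eq_self {a : End E} (ha : ActsAs φ a) : a = φ := by
  simpa using ha (𝟙 E)

lemma self_iff [Preadditive C] : ActsAs φ φ ↔ φ ∈ Subring.center (End E) := by
  simp only [ActsAs, Subring.mem_center_iff, End.mul_def]
  exact Iff.rfl

lemma cofanDesc {ι : Type*} {X : ι → C} {c : Cofan X} (hc : IsColimit c)
    {a : ∀ i, End (X i)} (ha : ∀ i, ActsAs φ (a i)) :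
    ActsAs φ (Cofan.IsColimit.desc hc fun i => a i ≫ c.inj i) := fun h =>
  Cofan.IsColimit.hom_ext hc _ _ fun i => by
    rw [Cofan.IsColimit.fac_assoc, Category.assoc, ha i, Category.assoc]

lemma of_mono (hinj : Injective E) {M N : C} {f : M ⟶ N} [Mono f] {a : End M} {b : End N}
    (hb : ActsAs φ b) (hab : a ≫ f = f ≫ b) : ActsAs φ a := fun h => by
  obtain ⟨h', rfl⟩ := hinj.factors h f
  rw [← Category.assoc, hab, Category.assoc, hb, Category.assoc]

lemma exists_of_exact [Abelian C] (hinj : Injective E) (hcosep : IsCoseparator E)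
    {S : ShortComplex C} (hS : S.Exact) [Mono S.f] {b : End S.X₂} {b' : End S.X₃}
    (hb : ActsAs φ b) (hb' : ActsAs φ b') : ∃ a : End S.X₁, ActsAs φ a := by
  have hzero : (S.f ≫ b) ≫ S.g = 0 := by
    rw [Category.assoc, hb.comp_eq hcosep hb' S.g, ← Category.assoc, S.zero, zero_comp]
  exact ⟨hS.lift _ hzero, of_mono hinj hb (hS.lift_f _ hzero)⟩

end ActsAs

lemma actsAs_app (z : End (𝟭 C)) (E X : C) : ActsAs (z.app E) (z.app X) := fun h =>
  (z.naturality h).symm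

def natTransOfActsAs [Preadditive C] {E : C} (hcosep : IsCoseparator E) {φ : End E}
    (a : ∀ X : C, End X) (ha : ∀ X, ActsAs φ (a X)) : End (𝟭 C) where
  app := a
  naturality _ _ u := ((ha _).comp_eq hcosep (ha _) u).symm

end

variable {C : Type u} [Category.{v} C] [Abelian C]

theorem center_eval_good_cogenerator_general
    (E : C) (hE : Injective E)
    (hcog : ∀ M : C, ¬ IsZero M → ∃ f : M ⟶ E, f ≠ 0)
    (hgood : ∀ M : C, ∃ (ι κ : Type v) (c : Cofan (fun _ : ι => E))
      (_ : IsColimit c) (c' : Cofan (fun _ : κ => E)) (_ : IsColimit c')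
      (f : M ⟶ c.pt) (g : c.pt ⟶ c'.pt) (w : f ≫ g = 0),
        Mono f ∧ (ShortComplex.mk f g w).Exact) :
    Function.Injective (fun z : End (𝟭 C) => (z.app E : End E)) ∧
    Set.range (fun z : End (𝟭 C) => (z.app E : End E)) =
      (Subring.center (End E) : Set (End E)) := by
  have hcosep := isCoseparator_of_injective hE hcog
  refine ⟨fun z z' hzz => NatTrans.ext <| funext fun X => ?_,
    Set.ext fun φ => ⟨?_, fun hφ => ?_⟩⟩
  · have hzz : z.app E = z'.app E := hzz
    exact (actsAs_app z E X).eq hcosep (hzz ▸ actsAs_app z' E X)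
  · rintro ⟨z, rfl⟩
    exact ActsAs.self_iff.1 (actsAs_app z E E)
  · have hφ := ActsAs.self_iff.2 hφ
    have hsum : ∀ {ι : Type v} {c : Cofan fun _ : ι => E} (hc : IsColimit c),
        ActsAs φ (Cofan.IsColimit.desc hc fun i => φ ≫ c.inj i) :=
      fun hc => ActsAs.cofanDesc hc fun _ => hφ
    have hex : ∀ M : C, ∃ a : End M, ActsAs φ a := fun M => by
      obtain ⟨_, _, _, hc, _, hc', f, g, w, hf, hS⟩ := hgood M
      exact ActsAs.exists_of_exact (S := ShortComplex.mk f g w) hE hcosep hS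
        (hsum hc) (hsum hc')
    choose a ha using hex
    exact ⟨natTransOfActsAs hcosep a ha, (ha E).eq_self⟩

/-- Let `E` be an injective cogenerator of a Grothendieck
category `C` such that every object embeds into a direct sum of copies of `E`
(a "good cogenerator", i.e. every object `M` admits an exact sequence
`0 → M → E^(I) → E^(J)`). Then the evaluation map
`Z(C) = End(𝟭 C) → End(E)`, `z ↦ z.app E`, is injective with image exactly the
center of the ring `End(E)`; i.e. it is a ring isomorphism onto `Z(End(E))`. -/
theorem center_eval_good_cogenerator
    [HasColimits C] [AB5 C] (hsep : ∃ G : C, IsSeparator G)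
    (E : C) (hE : Injective E)
    (hcog : ∀ M : C, ¬ IsZero M → ∃ f : M ⟶ E, f ≠ 0)
    (hgood : ∀ M : C, ∃ (ι κ : Type v) (c : Cofan (fun _ : ι => E))
      (_ : IsColimit c) (c' : Cofan (fun _ : κ => E)) (_ : IsColimit c')
      (f : M ⟶ c.pt) (g : c.pt ⟶ c'.pt) (w : f ≫ g = 0),
        Mono f ∧ (ShortComplex.mk f g w).Exact) :
    Function.Injective (fun z : End (𝟭 C) => (z.app E : End E)) ∧
    Set.range (fun z : End (𝟭 C) => (z.app E : End E)) =
      (Subring.center (End E) : Set (End E)) :=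
  center_eval_good_cogenerator_general E hE hcog hgood

end CentralSheaf
end
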